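/- If g ∈ H_l(γ₁, γ₂, C) ∩ M[0, 2γ₂], then the series u(x,t) = Σ_{n=0}^∞ g^{(n)}(t) (x₀−x)^{2n}/(2n)! + Σ_{n=0}^∞ (∂^{n+1/2}_t g)(t) (x₀−x)^{2n+1}/(2n+1)! converges uniformly and absolutely on {(x,t) : |x₀−x| ≤ r, t ∈ [0,2γ₂]} for every r < √(2/5) γ₁. -/

import Mathlib

open Set intervalIntegral Real Filter

/-- `φ ∈ M[0,T]`: smooth on `[0,T]` with all derivatives (including the value) vanishing at 0. -/
def MemM (T : ℝ) (φ : ℝ → ℝ) : Prop :=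
  ContDiffOn ℝ (⊤ : ℕ∞) φ (Set.Icc 0 T) ∧
    ∀ n : ℕ, iteratedDerivWithin n φ (Set.Icc 0 T) 0 = 0

/-- The Holmgren class `H_l(γ₁, γ₂, C)`: smooth functions on `[0, 2γ₂]` with
`sup |φ⁽ⁿ⁾| < C (2n)!/γ₁^{2n}` for every `n ≥ 0`. -/
def Holmgren (γ₁ γ₂ C : ℝ) (φ : ℝ → ℝ) : Prop :=
  ContDiffOn ℝ (⊤ : ℕ∞) φ (Set.Icc 0 (2 * γ₂)) ∧
    ∀ n : ℕ, ∀ t ∈ Set.Icc (0:ℝ) (2 * γ₂),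
      |iteratedDerivWithin n φ (Set.Icc 0 (2 * γ₂)) t| <
        C * (Nat.factorial (2 * n)) / γ₁ ^ (2 * n)

/-- The fractional derivative of order `n + 1/2` based at `0` (Caputo form,
coinciding with Riemann–Liouville on `M[0, 2γ₂]`). -/
noncomputable def fracDerivHalf (γ₂ : ℝ) (n : ℕ) (g : ℝ → ℝ) : ℝ → ℝ :=
  fun t => (1 / Real.Gamma (1/2)) *
    ∫ s in (0:ℝ)..t, (t - s) ^ (-(1:ℝ)/2) *
      iteratedDerivWithin (n + 1) g (Set.Icc 0 (2 * γ₂)) s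

/-- Bound on the half-order fractional derivatives of a Holmgren-class function. -/
lemma fracDerivHalf_bound (γ₁ γ₂ C : ℝ) (hγ₁ : 0 < γ₁) (hγ₂ : 0 < γ₂) (hC : 0 < C)
    (g : ℝ → ℝ) (hgH : Holmgren γ₁ γ₂ C g) (n : ℕ) (t : ℝ) (ht : t ∈ Set.Icc (0:ℝ) (2 * γ₂)) :
    |fracDerivHalf γ₂ n g t| ≤
      2 * Real.sqrt (2 * γ₂) / Real.sqrt π *
        (C * (Nat.factorial (2 * (n + 1))) / γ₁ ^ (2 * (n + 1))) := by
  obtain ⟨ht0, ht2⟩ := ht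
  set B : ℝ := C * (Nat.factorial (2 * (n + 1))) / γ₁ ^ (2 * (n + 1)) with hBdef
  have hB : 0 < B := by positivity
  have hπ : (0:ℝ) < Real.sqrt π := Real.sqrt_pos.mpr Real.pi_pos
  have hint : IntervalIntegrable (fun s => (t - s) ^ (-(1:ℝ)/2) * B) MeasureTheory.volume 0 t := by
    have h1 : IntervalIntegrable (fun x : ℝ => x ^ (-(1:ℝ)/2)) MeasureTheory.volume 0 t :=
      intervalIntegrable_rpow' (by norm_num)
    have h2 := h1.comp_sub_left t
    simp only [sub_zero, sub_self] at h2
    exact h2.symm.mul_const B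
  have habs : ∀ᵐ s ∂(MeasureTheory.volume.restrict (Set.uIoc (0:ℝ) t)),
      ‖(t - s) ^ (-(1:ℝ)/2) * iteratedDerivWithin (n + 1) g (Set.Icc 0 (2 * γ₂)) s‖ ≤
        (t - s) ^ (-(1:ℝ)/2) * B := by
    filter_upwards [MeasureTheory.ae_restrict_mem measurableSet_uIoc] with s hs
    rw [Set.uIoc_of_le ht0] at hs
    have h1 : (0:ℝ) ≤ (t - s) ^ (-(1:ℝ)/2) := Real.rpow_nonneg (by linarith [hs.2]) _
    rw [Real.norm_eq_abs, abs_mul, abs_of_nonneg h1]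
    exact mul_le_mul_of_nonneg_left
      (hgH.2 (n + 1) s ⟨hs.1.le, hs.2.trans ht2⟩).le h1
  have hIle : |∫ s in (0:ℝ)..t, (t - s) ^ (-(1:ℝ)/2) *
        iteratedDerivWithin (n + 1) g (Set.Icc 0 (2 * γ₂)) s| ≤
      |∫ s in (0:ℝ)..t, (t - s) ^ (-(1:ℝ)/2) * B| := by
    simpa [Real.norm_eq_abs] using intervalIntegral.norm_integral_le_abs_of_norm_le habs hint
  have hval : (∫ s in (0:ℝ)..t, (t - s) ^ (-(1:ℝ)/2) * B) = 2 * Real.sqrt t * B := by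
    rw [intervalIntegral.integral_mul_const]
    congr 1
    rw [intervalIntegral.integral_comp_sub_left (fun x : ℝ => x ^ (-(1:ℝ)/2)) t]
    rw [sub_self, sub_zero, integral_rpow (Or.inl (by norm_num))]
    rw [Real.zero_rpow (by norm_num), Real.sqrt_eq_rpow]
    norm_num
    ring
  have hsq : Real.sqrt t ≤ Real.sqrt (2 * γ₂) := Real.sqrt_le_sqrt ht2
  have h2t : |(2 : ℝ) * Real.sqrt t * B| ≤ 2 * Real.sqrt (2 * γ₂) * B := by
    rw [abs_of_nonneg (by positivity)]
    have := Real.sqrt_nonneg t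
    nlinarith
  show |1 / Real.Gamma (1/2) * _| ≤ _
  rw [Real.Gamma_one_half_eq, abs_mul, abs_of_nonneg (by positivity : (0:ℝ) ≤ 1 / Real.sqrt π)]
  calc 1 / Real.sqrt π * |∫ s in (0:ℝ)..t, (t - s) ^ (-(1:ℝ)/2) *
        iteratedDerivWithin (n + 1) g (Set.Icc 0 (2 * γ₂)) s|
      ≤ 1 / Real.sqrt π * (2 * Real.sqrt (2 * γ₂) * B) := by
        apply mul_le_mul_of_nonneg_left _ (by positivity)
        calc _ ≤ |∫ s in (0:ℝ)..t, (t - s) ^ (-(1:ℝ)/2) * B| := hIle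
          _ = |(2 : ℝ) * Real.sqrt t * B| := by rw [hval]
          _ ≤ 2 * Real.sqrt (2 * γ₂) * B := h2t
    _ = 2 * Real.sqrt (2 * γ₂) / Real.sqrt π * B := by ring

theorem series_converges_uniformly_absolutely
    (γ₁ γ₂ C x₀ r : ℝ) (hγ₁ : 0 < γ₁) (hγ₂ : 0 < γ₂) (hC : 0 < C) (hx₀ : 0 < x₀)
    (hr : r < Real.sqrt (2/5) * γ₁)
    (g : ℝ → ℝ) (hgH : Holmgren γ₁ γ₂ C g) (hgM : MemM (2 * γ₂) g) :
    let f : ℕ → ℝ × ℝ → ℝ := fun n p =>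
      iteratedDerivWithin n g (Set.Icc 0 (2 * γ₂)) p.2 *
          (x₀ - p.1) ^ (2 * n) / (Nat.factorial (2 * n)) +
        fracDerivHalf γ₂ n g p.2 *
          (x₀ - p.1) ^ (2 * n + 1) / (Nat.factorial (2 * n + 1))
    let D : Set (ℝ × ℝ) := {p | |x₀ - p.1| ≤ r ∧ p.2 ∈ Set.Icc (0:ℝ) (2 * γ₂)}
    TendstoUniformlyOn (fun N p => ∑ n ∈ Finset.range N, f n p)
        (fun p => ∑' n, f n p) atTop D ∧
      ∀ p ∈ D, Summable fun n => |f n p| := by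
  intro f D
  set ρ : ℝ := max r 0 with hρdef
  have hρ0 : (0:ℝ) ≤ ρ := le_max_right _ _
  have hργ : ρ < γ₁ := by
    have hs : Real.sqrt (2/5) ≤ 1 := by
      rw [show (1:ℝ) = Real.sqrt 1 by simp]
      exact Real.sqrt_le_sqrt (by norm_num)
    have h0 : (0:ℝ) < Real.sqrt (2/5) * γ₁ := by
      have : (0:ℝ) < Real.sqrt (2/5) := Real.sqrt_pos.mpr (by norm_num)
      positivity
    have : ρ < Real.sqrt (2/5) * γ₁ := max_lt hr h0
    calc ρ < Real.sqrt (2/5) * γ₁ := this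
      _ ≤ 1 * γ₁ := mul_le_mul_of_nonneg_right hs hγ₁.le
      _ = γ₁ := one_mul _
  set q : ℝ := ρ / γ₁ with hqdef
  have hq0 : 0 ≤ q := by positivity
  have hq1 : q < 1 := (div_lt_one hγ₁).mpr hργ
  have hq2 : q ^ 2 < 1 := by nlinarith
  set K : ℝ := 2 * Real.sqrt (2 * γ₂) / Real.sqrt π * C / γ₁ with hKdef
  have hπ : (0:ℝ) < Real.sqrt π := Real.sqrt_pos.mpr Real.pi_pos
  have hK : 0 ≤ K := by positivity
  set M : ℕ → ℝ := fun n => C * (q ^ 2) ^ n + 2 * K * q * ((n : ℝ) + 1) * (q ^ 2) ^ n with hMdef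
  have hq2pow : ∀ n : ℕ, (q ^ 2) ^ n = ρ ^ (2 * n) / γ₁ ^ (2 * n) := by
    intro n
    rw [← pow_mul, hqdef, div_pow]
  have hM : Summable M := by
    apply Summable.add
    · exact (summable_geometric_of_lt_one (by positivity) hq2).mul_left _
    · have h1 : Summable fun n : ℕ => ((n : ℝ) + 1) * (q ^ 2) ^ n := by
        have ha := summable_pow_mul_geometric_of_norm_lt_one (R := ℝ) 1
          (r := q ^ 2) (by rw [Real.norm_eq_abs, abs_of_nonneg (by positivity)]; exact hq2)
        have hb := summable_geometric_of_lt_one (r := q ^ 2) (by positivity) hq2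
        simpa [add_mul, pow_one] using ha.add hb
      have := h1.mul_left (2 * K * q)
      simpa [mul_assoc] using this
  have hbound : ∀ (n : ℕ) (p : ℝ × ℝ), p ∈ D → ‖f n p‖ ≤ M n := by
    intro n p hp
    obtain ⟨hx, ht⟩ : |x₀ - p.1| ≤ r ∧ p.2 ∈ Set.Icc (0:ℝ) (2 * γ₂) := hp
    have hXρ : |x₀ - p.1| ≤ ρ := hx.trans (le_max_left _ _)
    have hA : |iteratedDerivWithin n g (Set.Icc 0 (2 * γ₂)) p.2| ≤
        C * (Nat.factorial (2 * n)) / γ₁ ^ (2 * n) := (hgH.2 n p.2 ht).le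
    have hFD := fracDerivHalf_bound γ₁ γ₂ C hγ₁ hγ₂ hC g hgH n p.2 ht
    have h1 : |iteratedDerivWithin n g (Set.Icc 0 (2 * γ₂)) p.2 *
        (x₀ - p.1) ^ (2 * n) / (Nat.factorial (2 * n))| ≤ C * (q ^ 2) ^ n := by
      have fp : (0:ℝ) < (Nat.factorial (2 * n) : ℝ) := by positivity
      rw [abs_div, abs_mul, abs_pow, Nat.abs_cast, div_le_iff₀ fp]
      calc |iteratedDerivWithin n g (Set.Icc 0 (2 * γ₂)) p.2| * |x₀ - p.1| ^ (2 * n)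
          ≤ (C * (Nat.factorial (2 * n)) / γ₁ ^ (2 * n)) * ρ ^ (2 * n) :=
            mul_le_mul hA (pow_le_pow_left₀ (abs_nonneg _) hXρ _)
              (pow_nonneg (abs_nonneg _) _) (by positivity)
        _ = C * (q ^ 2) ^ n * (Nat.factorial (2 * n)) := by
            rw [hq2pow n]; field_simp
    have h2 : |fracDerivHalf γ₂ n g p.2 *
        (x₀ - p.1) ^ (2 * n + 1) / (Nat.factorial (2 * n + 1))| ≤
        2 * K * q * ((n : ℝ) + 1) * (q ^ 2) ^ n := by
      have fp : (0:ℝ) < (Nat.factorial (2 * n + 1) : ℝ) := by positivity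
      rw [abs_div, abs_mul, abs_pow, Nat.abs_cast, div_le_iff₀ fp]
      have hfact : ((Nat.factorial (2 * (n + 1)) : ℕ) : ℝ) =
          (2 * (n : ℝ) + 2) * (Nat.factorial (2 * n + 1) : ℝ) := by
        have h : 2 * (n + 1) = (2 * n + 1) + 1 := by ring
        rw [h, Nat.factorial_succ]
        push_cast
        ring
      calc |fracDerivHalf γ₂ n g p.2| * |x₀ - p.1| ^ (2 * n + 1)
          ≤ (2 * Real.sqrt (2 * γ₂) / Real.sqrt π *
              (C * (Nat.factorial (2 * (n + 1))) / γ₁ ^ (2 * (n + 1)))) * ρ ^ (2 * n + 1) :=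
            mul_le_mul hFD (pow_le_pow_left₀ (abs_nonneg _) hXρ _)
              (pow_nonneg (abs_nonneg _) _)
              (le_trans (abs_nonneg _) hFD)
        _ = 2 * K * q * ((n : ℝ) + 1) * (q ^ 2) ^ n * (Nat.factorial (2 * n + 1)) := by
            rw [hq2pow n, hKdef, hqdef, hfact]
            have hg1 : γ₁ ^ (2 * (n + 1)) = γ₁ ^ (2 * n) * γ₁ ^ 2 := by
              rw [← pow_add]; ring_nf
            have hr1 : ρ ^ (2 * n + 1) = ρ ^ (2 * n) * ρ := by
              rw [pow_succ]
            rw [hg1, hr1]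
            field_simp
    calc ‖f n p‖ ≤ |iteratedDerivWithin n g (Set.Icc 0 (2 * γ₂)) p.2 *
          (x₀ - p.1) ^ (2 * n) / (Nat.factorial (2 * n))| +
          |fracDerivHalf γ₂ n g p.2 *
            (x₀ - p.1) ^ (2 * n + 1) / (Nat.factorial (2 * n + 1))| := abs_add_le _ _
      _ ≤ M n := add_le_add h1 h2
  constructor
  · exact tendstoUniformlyOn_tsum_nat hM hbound
  · intro p hp
    exact Summable.of_nonneg_of_le (fun n => abs_nonneg _)
      (fun n => by simpa [Real.norm_eq_abs] using hbound n p hp) hM
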